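/- Let A be an n×n real matrix, D : ℝⁿ → Matrix n n ℝ a continuous map such that for all vectors u, v: vᵀ D(u) v ≥ d₀ ‖v‖² with d₀ > 0, and let G be an n×k real matrix. Consider the ODE system p' = -G m + f, m' = Gᵀ p - D(m) m + g on ℝᵏ × ℝⁿ with constant f, g. If (p̄, m̄) is an equilibrium (i.e., G m̄ = f and Gᵀ p̄ - D(m̄) m̄ + g = 0) and (p, m) is any solution, then the function t ↦ ‖p(t) - p̄‖² + ‖m(t) - m̄‖² is nonincreasing, provided additionally (D(a) a - D(b) b)ᵀ (a - b) ≥ 0 for all a, b. -/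

import Mathlib

open Matrix

lemma dot_hasDerivAt {N : ℕ} (q : ℝ → Fin N → ℝ) (q' qb : Fin N → ℝ) (t : ℝ)
    (h : HasDerivAt q q' t) :
    HasDerivAt (fun s => (q s - qb) ⬝ᵥ (q s - qb))
      (q' ⬝ᵥ (q t - qb) + (q t - qb) ⬝ᵥ q') t := by
  simp only [dotProduct]
  rw [← Finset.sum_add_distrib]
  apply HasDerivAt.fun_sum
  intro i _
  have hi : HasDerivAt (fun s => q s i - qb i) (q' i) t :=
    ((hasDerivAt_pi.mp h) i).sub_const _
  simpa [Pi.sub_apply, mul_comm] using hi.fun_mul hi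

theorem galerkin_lyapunov_contraction {n k : ℕ}
    (D : (Fin n → ℝ) → Matrix (Fin n) (Fin n) ℝ) (hDcont : Continuous D)
    (d₀ : ℝ) (hd₀ : 0 < d₀)
    (hDpos : ∀ u v : Fin n → ℝ, d₀ * (v ⬝ᵥ v) ≤ v ⬝ᵥ (D u).mulVec v)
    (hDmono : ∀ a b : Fin n → ℝ, 0 ≤ ((D a).mulVec a - (D b).mulVec b) ⬝ᵥ (a - b))
    (G : Matrix (Fin k) (Fin n) ℝ) (f : Fin k → ℝ) (g : Fin n → ℝ)
    (pbar : Fin k → ℝ) (mbar : Fin n → ℝ)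
    (heq1 : G.mulVec mbar = f)
    (heq2 : Gᵀ.mulVec pbar - (D mbar).mulVec mbar + g = 0)
    (p : ℝ → Fin k → ℝ) (m : ℝ → Fin n → ℝ)
    (hp : ∀ t, HasDerivAt p (-G.mulVec (m t) + f) t)
    (hm : ∀ t, HasDerivAt m (Gᵀ.mulVec (p t) - (D (m t)).mulVec (m t) + g) t) :
    AntitoneOn (fun t => (p t - pbar) ⬝ᵥ (p t - pbar) + (m t - mbar) ⬝ᵥ (m t - mbar))
      (Set.Ici 0) := by
  set P' : ℝ → Fin k → ℝ := fun t => -G.mulVec (m t) + f with hP'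
  set M' : ℝ → Fin n → ℝ := fun t => Gᵀ.mulVec (p t) - (D (m t)).mulVec (m t) + g with hM'
  have hV : ∀ t, HasDerivAt
      (fun s => (p s - pbar) ⬝ᵥ (p s - pbar) + (m s - mbar) ⬝ᵥ (m s - mbar))
      ((P' t ⬝ᵥ (p t - pbar) + (p t - pbar) ⬝ᵥ P' t)
        + (M' t ⬝ᵥ (m t - mbar) + (m t - mbar) ⬝ᵥ M' t)) t := fun t =>
    (dot_hasDerivAt p (P' t) pbar t (hp t)).add (dot_hasDerivAt m (M' t) mbar t (hm t))
  have hneg : ∀ t, (P' t ⬝ᵥ (p t - pbar) + (p t - pbar) ⬝ᵥ P' t)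
        + (M' t ⬝ᵥ (m t - mbar) + (m t - mbar) ⬝ᵥ M' t) ≤ 0 := by
    intro t
    have hg : g = (D mbar).mulVec mbar - Gᵀ.mulVec pbar := by
      have h := eq_neg_of_add_eq_zero_right heq2
      rw [h, neg_sub]
    have hP : P' t = -(G.mulVec (m t - mbar)) := by
      rw [hP', ← heq1, Matrix.mulVec_sub]; abel
    have hM : M' t = Gᵀ.mulVec (p t - pbar)
        - ((D (m t)).mulVec (m t) - (D mbar).mulVec mbar) := by
      rw [hM', hg, Matrix.mulVec_sub]; abel
    rw [hP, hM]
    set dp := p t - pbar with hdp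
    set dm := m t - mbar with hdm
    set E := (D (m t)).mulVec (m t) - (D mbar).mulVec mbar with hE
    have key : ∀ (u : Fin k → ℝ) (v : Fin n → ℝ),
        (Gᵀ.mulVec u) ⬝ᵥ v = (G.mulVec v) ⬝ᵥ u := by
      intro u v
      rw [Matrix.mulVec_transpose, ← Matrix.dotProduct_mulVec, dotProduct_comm]
    have c1 : dp ⬝ᵥ (G.mulVec dm) = (G.mulVec dm) ⬝ᵥ dp := dotProduct_comm _ _
    have c2 : (Gᵀ.mulVec dp) ⬝ᵥ dm = (G.mulVec dm) ⬝ᵥ dp := key _ _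
    have c3 : dm ⬝ᵥ (Gᵀ.mulVec dp) = (G.mulVec dm) ⬝ᵥ dp := by
      rw [dotProduct_comm]; exact key _ _
    have c4 : dm ⬝ᵥ E = E ⬝ᵥ dm := dotProduct_comm _ _
    have hY : 0 ≤ E ⬝ᵥ dm := hDmono (m t) mbar
    set Gm := G.mulVec dm with hGm
    set Gp := Gᵀ.mulVec dp with hGp
    simp only [neg_dotProduct, dotProduct_neg, sub_dotProduct, dotProduct_sub]
    rw [c1, c2, c3, c4]
    linarith
  apply antitoneOn_of_deriv_nonpos (convex_Ici 0)
  · exact fun t _ => (hV t).differentiableAt.continuousAt.continuousWithinAt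
  · exact fun t _ => (hV t).differentiableAt.differentiableWithinAt
  · intro t _
    rw [(hV t).deriv]
    exact hneg t
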